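/- arXiv:1606.04021 — 3 statements merged into one kernel-verified Lean document; each statement's English description precedes it below -/
import Mathlib

section
/- Let G be a finite simple graph with vertex set V, let α : V → ℝ and β : E(G) → ℝ, and for an assignment a : V → {−1,+1} define E(a) = Σ_{v∈V} α(v) a(v) + Σ_{{u,v}∈E(G)} β({u,v}) a(u)a(v). Suppose there exist induced subgraphs G_1, …, G_r of G, each chordal, together with decompositions α = Σ_{j=1}^r α^{(j)} and β = Σ_{j=1}^r β^{(j)} where α^{(j)} is supported on V(G_j) and β^{(j)} is supported on E(G_j), and set ω_j = max over assignments a : V(G_j) → {−1,+1} of E_j(a) = Σ_{v∈V(G_j)} α^{(j)}(v) a(v) + Σ_{{u,v}∈E(G_j)} β^{(j)}({u,v}) a(u)a(v). Then every no-disturbance model on G with outcomes in {−1,+1} satisfies Σ_{v∈V} α(v) ⟨v⟩ + Σ_{{u,v}∈E(G)} β({u,v}) ⟨uv⟩ ≤ Σ_{j=1}^r ω_j. -/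
/-- The two-element set of outcomes `{−1, +1}` (as a subtype of `ℤ`). -/
abbrev Sgn : Type := ({-1, 1} : Finset ℤ)

instance : Nonempty Sgn := ⟨⟨1, by decide⟩⟩

/-- A finite simple graph is *chordal* if every cycle of length at least 4 has a
chord, i.e. an edge of the graph joining two vertices of the cycle that are not
consecutive on the cycle. -/
def SimpleGraph.IsChordal {W : Type*} (G : SimpleGraph W) : Prop :=
  ∀ (v : W) (c : G.Walk v v), c.IsCycle → 4 ≤ c.length →
    ∃ u w : W, u ∈ c.support ∧ w ∈ c.support ∧ G.Adj u w ∧ ¬ c.toSubgraph.Adj u w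

/-- A *no-disturbance model* with outcomes in `{−1,+1}` on a finite simple graph `G`
assigns to each clique `C` of `G` a probability distribution `p C` on the functions
`C → {−1,+1}`, such that whenever `C ⊆ D` are cliques, `p C` is the marginal of
`p D`. -/
structure NDModel {V : Type*} [Fintype V] [DecidableEq V] (G : SimpleGraph V) where
  p : (C : Finset V) → (C → Sgn) → ℝ
  nonneg : ∀ C : Finset V, G.IsClique (C : Set V) → ∀ f : C → Sgn, 0 ≤ p C f
  normalized : ∀ C : Finset V, G.IsClique (C : Set V) → ∑ f : C → Sgn, p C f = 1
  nodisturb : ∀ C D : Finset V, ∀ hCD : C ⊆ D, G.IsClique (D : Set V) →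
    ∀ g : C → Sgn,
      p C g = ∑ f : D → Sgn, if (∀ x : C, f ⟨x.1, hCD x.2⟩ = g x) then p D f else 0

/-- The correlator `⟨uv⟩ = Σ_f f(u)f(v)·p_{{u,v}}(f)` of two (adjacent) vertices. -/
def NDModel.corr {V : Type*} [Fintype V] [DecidableEq V] {G : SimpleGraph V}
    (M : NDModel G) (u v : V) : ℝ :=
  ∑ f : ({u, v} : Finset V) → Sgn,
    (((f ⟨u, by simp⟩ : ℤ) * (f ⟨v, by simp⟩ : ℤ) : ℤ) : ℝ) * M.p {u, v} f

/-- The single-vertex mean `⟨u⟩ = Σ_f f(u)·p_{{u}}(f)`. -/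
def NDModel.mean {V : Type*} [Fintype V] [DecidableEq V] {G : SimpleGraph V}
    (M : NDModel G) (u : V) : ℝ :=
  ∑ f : ({u} : Finset V) → Sgn, ((f ⟨u, by simp⟩ : ℤ) : ℝ) * M.p {u} f

variable {V : Type*} [Fintype V] [DecidableEq V]

/-- The value `a(u)a(v)` of an assignment on an unordered pair `{u, v}`. -/
def edgeTerm (a : V → Sgn) : Sym2 V → ℤ :=
  Sym2.lift ⟨fun u v => (a u : ℤ) * (a v : ℤ), fun u v => mul_comm _ _⟩

/-- The unordered pair `{u, v}` of the endpoints of an element of `Sym2 V`. -/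
def pairFinset : Sym2 V → Finset V :=
  Sym2.lift ⟨fun u v => ({u, v} : Finset V), fun u v => Finset.pair_comm u v⟩

/-- The correlator `⟨uv⟩` of a no-disturbance model on the unordered pair `e`. -/
noncomputable def NDModel.corrE {G : SimpleGraph V} (M : NDModel G) (e : Sym2 V) : ℝ :=
  ∑ f : ↥(pairFinset e) → Sgn,
    ((∏ x : ↥(pairFinset e), (f x : ℤ) : ℤ) : ℝ) * M.p (pairFinset e) f

/-!
For one chordal piece `W`, the model restricted to `W` is a mixture of deterministic
assignments (Vorob'ev's theorem), so the `j`-th expression has expectation at most `ω j`;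
summing over `j` gives the bound. For the mixture, `W` has a simplicial vertex `v` (Dirac), by
induction there is a joint distribution on `W \ {v}` with the model's clique marginals, and
gluing it with `p` on the clique `{v} ∪ N(v)`, conditionally independently given `N(v)`, gives
one on `W`: every clique of `W` lies in `W \ {v}` or in `{v} ∪ N(v)`.
-/

open Finset

theorem Finset.sum_mul_eq_sum_sum_of_support {ι κ R : Type*} [Fintype κ]
    [NonUnitalNonAssocSemiring R] {s : Finset ι} {t : κ → Finset ι} {c : ι → R}
    {cj : κ → ι → R} (ht : ∀ j, t j ⊆ s) (hsupp : ∀ j, ∀ i ∈ s, cj j i ≠ 0 → i ∈ t j)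
    (hc : ∀ i ∈ s, c i = ∑ j, cj j i) (x : ι → R) :
    ∑ i ∈ s, c i * x i = ∑ j, ∑ i ∈ t j, cj j i * x i := by
  rw [sum_congr rfl fun i hi => by rw [hc i hi, sum_mul], sum_comm]
  refine sum_congr rfl fun j _ => (sum_subset (ht j) fun i hi hit => ?_).symm
  rw [not_imp_comm.1 (hsupp j i hi) hit, zero_mul]

section Marginal

variable {ι α : Type*} {A B C D E I : Finset ι}

/-- The coupling of `μ` and `ν` that is conditionally independent given the coordinates in `I`.
Where the common marginal `ρ` vanishes so does `μ`, so the junk value `x / 0 = 0` is the right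
one. -/
noncomputable def glue (hA : A ⊆ D) (hB : B ⊆ D) (hI : I ⊆ D) (μ : (A → α) → ℝ)
    (ν : (B → α) → ℝ) (ρ : (I → α) → ℝ) (f : D → α) : ℝ :=
  μ (restrict₂ (π := fun _ => α) hA f) * ν (restrict₂ (π := fun _ => α) hB f) /
    ρ (restrict₂ (π := fun _ => α) hI f)

variable {μ : (A → α) → ℝ} {ν : (B → α) → ℝ} {ρ : (I → α) → ℝ}

theorem glue_nonneg (hA : A ⊆ D) (hB : B ⊆ D) (hI : I ⊆ D) (hμ : 0 ≤ μ) (hν : 0 ≤ ν)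
    (hρ : 0 ≤ ρ) : 0 ≤ glue hA hB hI μ ν ρ :=
  fun _ => div_nonneg (mul_nonneg (hμ _) (hν _)) (hρ _)

theorem glue_comm (hA : A ⊆ D) (hB : B ⊆ D) (hI : I ⊆ D) :
    glue hA hB hI μ ν ρ = glue hB hA hI ν μ ρ :=
  funext fun _ => by rw [glue, glue, mul_comm]

variable [DecidableEq ι] [Fintype α] [DecidableEq α]

noncomputable def marginal (h : C ⊆ D) (q : (D → α) → ℝ) (g : C → α) : ℝ :=
  ∑ f, if restrict₂ (π := fun _ => α) h f = g then q f else 0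

theorem marginal_self (h : C ⊆ C) (q : (C → α) → ℝ) : marginal h q = q := by
  funext g
  simp [marginal, restrict₂_def]

theorem marginal_nonneg (h : C ⊆ D) {q : (D → α) → ℝ} (hq : 0 ≤ q) : 0 ≤ marginal h q :=
  fun _ => sum_nonneg fun f _ => by split_ifs; exacts [hq f, le_rfl]

theorem le_marginal (h : C ⊆ D) {q : (D → α) → ℝ} (hq : 0 ≤ q) (f : D → α) :
    q f ≤ marginal h q (restrict₂ (π := fun _ => α) h f) := by
  refine le_of_eq_of_le (if_pos rfl).symm (single_le_sum (f := fun f' =>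
    if restrict₂ (π := fun _ => α) h f' = restrict₂ (π := fun _ => α) h f then q f' else 0)
    (fun f' _ => ?_) (mem_univ f))
  split_ifs
  exacts [hq f', le_rfl]

theorem sum_mul_marginal (h : C ⊆ D) (q : (D → α) → ℝ) (F : (C → α) → ℝ) :
    ∑ g, F g * marginal h q g = ∑ f, F (restrict₂ (π := fun _ => α) h f) * q f := by
  simp only [marginal, mul_sum, mul_ite, mul_zero]
  rw [sum_comm]
  simp

theorem marginal_marginal (hCD : C ⊆ D) (hDE : D ⊆ E) (q : (E → α) → ℝ) :
    marginal hCD (marginal hDE q) = marginal (hCD.trans hDE) q := by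
  funext g
  have h := sum_mul_marginal hDE q fun g' =>
    if restrict₂ (π := fun _ => α) hCD g' = g then (1 : ℝ) else 0
  simp only [ite_mul, one_mul, zero_mul] at h
  exact h

theorem marginal_mul_restrict₂ (h : C ⊆ D) (c : (C → α) → ℝ) (q : (D → α) → ℝ) (g : C → α) :
    marginal h (fun f => c (restrict₂ (π := fun _ => α) h f) * q f) g = c g * marginal h q g := by
  simp only [marginal, mul_sum, mul_ite, mul_zero]
  exact sum_congr rfl fun f _ => by split_ifs with hf <;> simp [hf]

theorem marginal_comp_restrict₂ (hA : A ⊆ D) (hB : B ⊆ D) (hD : D ⊆ A ∪ B) (hIA : I ⊆ A)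
    (hIB : I ⊆ B) (hI : A ∩ B ⊆ I) (F : (B → α) → ℝ) (g : A → α) :
    marginal hA (fun f => F (restrict₂ (π := fun _ => α) hB f)) g =
      marginal hIB F (restrict₂ (π := fun _ => α) hIA g) := by
  simp only [marginal, ← sum_filter]
  refine sum_nbij' (restrict₂ (π := fun _ => α) hB)
    (fun h x => if hx : x.1 ∈ A then g ⟨x, hx⟩
      else h ⟨x, (mem_union.1 (hD x.2)).resolve_left hx⟩) ?_ ?_ ?_ ?_ (fun _ _ => rfl) <;>
    simp only [mem_filter, mem_univ, true_and]
  · rintro f rfl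
    rfl
  · intro h _
    funext x
    simp [x.2]
  · rintro f rfl
    funext x
    split_ifs <;> rfl
  · intro h hh
    funext x
    simp only [restrict₂]
    split_ifs with hx
    · exact (congrFun hh ⟨x, hI (mem_inter.2 ⟨hx, x.2⟩)⟩).symm
    · rfl

theorem marginal_glue_left (hA : A ⊆ D) (hB : B ⊆ D) (hD : D ⊆ A ∪ B) (hIA : I ⊆ A)
    (hIB : I ⊆ B) (hI : A ∩ B ⊆ I) (hμ : 0 ≤ μ) (hμρ : marginal hIA μ = ρ)
    (hνρ : marginal hIB ν = ρ) : marginal hA (glue hA hB (hIA.trans hA) μ ν ρ) = μ := by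
  funext g
  have hglue : glue hA hB (hIA.trans hA) μ ν ρ = fun f =>
      (fun g => μ g / ρ (restrict₂ (π := fun _ => α) hIA g)) (restrict₂ (π := fun _ => α) hA f) *
        ν (restrict₂ (π := fun _ => α) hB f) :=
    funext fun _ => mul_div_right_comm _ _ _
  rw [hglue, marginal_mul_restrict₂ hA (fun g => μ g / ρ (restrict₂ (π := fun _ => α) hIA g)),
    marginal_comp_restrict₂ hA hB hD hIA hIB hI, hνρ]
  rcases eq_or_ne (ρ (restrict₂ (π := fun _ => α) hIA g)) 0 with h0 | h0
  · have hle := le_marginal hIA hμ g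
    rw [hμρ, h0] at hle
    rw [le_antisymm hle (hμ g), zero_div, zero_mul]
  · exact div_mul_cancel₀ _ h0

theorem marginal_glue_right (hA : A ⊆ D) (hB : B ⊆ D) (hD : D ⊆ A ∪ B) (hIA : I ⊆ A)
    (hIB : I ⊆ B) (hI : A ∩ B ⊆ I) (hν : 0 ≤ ν) (hμρ : marginal hIA μ = ρ)
    (hνρ : marginal hIB ν = ρ) : marginal hB (glue hA hB (hIA.trans hA) μ ν ρ) = ν := by
  rw [glue_comm]
  exact marginal_glue_left hB hA (union_comm A B ▸ hD) hIB hIA (inter_comm A B ▸ hI) hν hνρ hμρ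

theorem exists_marginal_eq_marginal_eq (hA : A ⊆ D) (hB : B ⊆ D) (hD : D ⊆ A ∪ B)
    (hμ : 0 ≤ μ) (hν : 0 ≤ ν)
    (h : marginal inter_subset_left μ = marginal inter_subset_right ν) :
    ∃ q, 0 ≤ q ∧ marginal hA q = μ ∧ marginal hB q = ν :=
  ⟨glue hA hB (inter_subset_left.trans hA) μ ν (marginal inter_subset_left μ),
    glue_nonneg _ _ _ hμ hν (marginal_nonneg _ hμ),
    marginal_glue_left hA hB hD _ _ subset_rfl hμ rfl h.symm,
    marginal_glue_right hA hB hD _ _ subset_rfl hν rfl h.symm⟩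

end Marginal

namespace SimpleGraph

variable {V : Type*} {G : SimpleGraph V}

def IsChordalOn (G : SimpleGraph V) (s : Set V) : Prop :=
  ∀ ⦃v : V⦄ (c : G.Walk v v), (∀ x ∈ c.support, x ∈ s) → c.IsCycle → 4 ≤ c.length →
    ¬ c.IsChordless

theorem IsChordalOn.mono {s t : Set V} (h : G.IsChordalOn s) (hts : t ⊆ s) : G.IsChordalOn t :=
  fun _ c hc => h c fun x hx => hts (hc x hx)

theorem IsChordal.isChordalOn {s : Set V} (h : (G.induce s).IsChordal) : G.IsChordalOn s := by
  intro v c hcs hcyc hlen hc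
  have hmap : (c.induce s hcs).map (Embedding.induce s).toHom = c := c.map_induce hcs
  obtain ⟨u, w, hu, hw, huw, hnot⟩ := h _ (c.induce s hcs) (.of_map (hmap ▸ hcyc))
    (by rwa [← Walk.length_map (Embedding.induce s).toHom, hmap])
  have hsupp : (c.induce s hcs).support.map Subtype.val = c.support :=
    (Walk.support_map _ _).symm.trans (congrArg Walk.support hmap)
  have hedges : (c.induce s hcs).edges.map (Sym2.map Subtype.val) = c.edges :=
    (Walk.edges_map _ _).symm.trans (congrArg Walk.edges hmap)
  have hmem : s((u : V), w) ∈ c.edges :=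
    hc.mem_edges (hsupp ▸ List.mem_map_of_mem hu) (hsupp ▸ List.mem_map_of_mem hw) huw
  rw [← hedges, List.mem_map] at hmem
  obtain ⟨e, he, hew⟩ := hmem
  refine hnot ?_
  rw [← Subgraph.mem_edgeSet, Walk.mem_edges_toSubgraph]
  convert he
  exact Sym2.map.injective Subtype.val_injective (by simpa using hew.symm)

namespace Walk

theorem isChordless_of_forall_length_le {U : Set V} {x y : V} {P : G.Walk x y}
    (hP : ∀ z ∈ P.support, z ∈ U)
    (hmin : ∀ Q : G.Walk x y, (∀ z ∈ Q.support, z ∈ U) → P.length ≤ Q.length) :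
    P.IsChordless := by
  rw [isChordless_iff_forall_mem_edges]
  intro u w hu hw huw
  obtain ⟨i, rfl, hi⟩ := mem_support_iff_exists_getVert.1 hu
  obtain ⟨j, rfl, hj⟩ := mem_support_iff_exists_getVert.1 hw
  wlog hij : i ≤ j generalizing i j
  · rw [Sym2.eq_swap]
    exact this j hj hw i hi hu huw.symm (le_of_not_ge hij)
  have hlt : i < j := lt_of_le_of_ne hij fun h => huw.ne (by rw [h])
  have hQ := hmin ((P.take i).append (cons huw (P.drop j))) fun z hz => by
    rw [mem_support_append_iff, support_cons, List.mem_cons, support_take,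
      drop_support_eq_support_drop_min] at hz
    rcases hz with hz | rfl | hz
    exacts [hP z (List.mem_of_mem_take hz), hP _ hu, hP z (List.mem_of_mem_drop hz)]
  simp only [length_append, take_length, length_cons, drop_length] at hQ
  obtain rfl : j = i + 1 := by omega
  exact (mk_mem_edges_iff_exists P).2 ⟨i, by omega, rfl⟩

theorem exists_isPath_isChordless {U : Set V} {x y : V} (P₀ : G.Walk x y)
    (hP₀ : ∀ z ∈ P₀.support, z ∈ U) :
    ∃ P : G.Walk x y, (∀ z ∈ P.support, z ∈ U) ∧ P.IsPath ∧ P.IsChordless := by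
  classical
  obtain ⟨P, hP, hmin⟩ := (InvImage.wf Walk.length wellFounded_lt).has_min
    {P : G.Walk x y | ∀ z ∈ P.support, z ∈ U} ⟨P₀, hP₀⟩
  have hbP : ∀ z ∈ P.bypass.support, z ∈ U := fun z hz => hP z (support_bypass_subset_support _ hz)
  refine ⟨P.bypass, hbP, bypass_isPath P, isChordless_of_forall_length_le hbP fun Q hQ => ?_⟩
  exact (length_bypass_le_length P).trans (not_lt.1 (hmin Q hQ))

theorem IsChordless.cons_concat {a x y : V} {P : G.Walk x y} (hP : P.IsChordless)
    (hax : G.Adj a x) (hay : G.Adj a y) (ha : ∀ z ∈ P.support, G.Adj a z → z = x ∨ z = y) :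
    (cons hax (P.concat hay.symm)).IsChordless := by
  have key : ∀ z ∈ P.support, G.Adj a z →
      s(a, z) ∈ (cons hax (P.concat hay.symm)).edges := by
    intro z hz haz
    rcases ha z hz haz with rfl | rfl <;> simp [edges_concat, Sym2.eq_swap]
  rw [isChordless_iff_forall_mem_edges]
  intro u w hu hw huw
  simp only [support_cons, support_concat, List.mem_cons, List.mem_append, List.mem_nil_iff,
    or_false] at hu hw
  rcases hu with rfl | hu | rfl <;> rcases hw with rfl | hw | rfl
  all_goals first
    | exact (huw.ne rfl).elim
    | exact key _ hw huw
    | (rw [Sym2.eq_swap]; exact key _ hu huw.symm)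
    | simp [edges_concat, hP.mem_edges hu hw huw]

end Walk

open Walk in
theorem IsChordalOn.adj_of_walk {s : Set V} (hs : G.IsChordalOn s) {a x y b₁ b₂ : V}
    (ha : a ∈ s) (hx : x ∈ s) (hy : y ∈ s) (hxy : x ≠ y) (hax : G.Adj a x) (hay : G.Adj a y)
    (hxb : G.Adj x b₁) (hyb : G.Adj y b₂) (Q : G.Walk b₁ b₂)
    (hQ : ∀ z ∈ Q.support, z ∈ s ∧ z ≠ a ∧ ¬ G.Adj a z) : G.Adj x y := by
  by_contra hnxy
  -- a shortest `x`–`y` path through `Q`, closed up through `a`, is a chordless cycle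
  obtain ⟨P, hPU, hPpath, hPchordless⟩ := exists_isPath_isChordless
    (U := {z | (z ∈ s ∧ z ≠ a ∧ ¬ G.Adj a z) ∨ z = x ∨ z = y}) (.cons hxb (Q.concat hyb.symm))
    fun z hz => by
      simp only [support_cons, support_concat, List.mem_cons, List.mem_append, List.mem_nil_iff,
        or_false] at hz
      rcases hz with rfl | hz | rfl
      exacts [.inr (.inl rfl), .inl (hQ z hz), .inr (.inr rfl)]
  have haP : a ∉ P.support := fun h => by
    rcases hPU a h with h | h | h
    exacts [h.2.1 rfl, hax.ne h, hay.ne h]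
  have hlen : 2 ≤ P.length := by
    by_contra! h
    interval_cases hP : P.length
    exacts [hxy (eq_of_length_eq_zero hP), hnxy (adj_of_length_eq_one hP)]
  refine hs (.cons hax (P.concat hay.symm)) (fun z hz => ?_) ((cons_isCycle_iff _ _).2
    ⟨hPpath.concat haP _, fun h => ?_⟩) (by simp [length_concat]; omega)
    (hPchordless.cons_concat hax hay fun z hz haz => ?_)
  · simp only [support_cons, support_concat, List.mem_cons, List.mem_append, List.mem_nil_iff,
      or_false] at hz
    rcases hz with rfl | hz | rfl
    · exact ha
    · rcases hPU z hz with h | rfl | rfl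
      exacts [h.1, hx, hy]
    · exact ha
  · rw [edges_concat, List.concat_eq_append, List.mem_append, List.mem_singleton] at h
    rcases h with h | h
    · exact haP (fst_mem_support_of_mem_edges P h)
    · rcases Sym2.eq_iff.1 h with ⟨rfl, -⟩ | ⟨-, rfl⟩
      exacts [hay.ne rfl, hxy rfl]
  · rcases hPU z hz with h | h
    exacts [(h.2.2 haz).elim, h]

def IsSimplicialOn (G : SimpleGraph V) (s : Set V) (v : V) : Prop :=
  G.IsClique (s ∩ G.neighborSet v)

theorem exists_nonuniversal_dominating_of_not_isClique {s K : Set V} (hs : ¬ G.IsClique s)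
    (hK : G.IsClique K) :
    ∃ a ∈ s, (∃ c ∈ s, c ≠ a ∧ ¬ G.Adj a c) ∧ ∀ k ∈ K ∩ s, k = a ∨ G.Adj a k := by
  by_cases h : ∃ k ∈ K ∩ s, ∃ c ∈ s, c ≠ k ∧ ¬ G.Adj k c
  · obtain ⟨k, hk, hc⟩ := h
    exact ⟨k, hk.2, hc, fun k' hk' => (eq_or_ne k' k).imp id fun hne => hK hk.1 hk'.1 hne.symm⟩
  · push Not at h
    obtain ⟨a, ha, c, hc, hac, hnadj⟩ : ∃ a ∈ s, ∃ c ∈ s, a ≠ c ∧ ¬ G.Adj a c := by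
      simpa [IsClique, Set.Pairwise] using hs
    exact ⟨a, ha, ⟨c, hc, hac.symm, hnadj⟩,
      fun k hk => (eq_or_ne k a).imp id fun hne => (h k hk a ha hne.symm).symm⟩

open Walk in
theorem IsChordalOn.exists_isClique_separator {s : Set V} (hs : G.IsChordalOn s) {a c : V}
    (ha : a ∈ s) (hc : c ∈ s) (hca : c ≠ a) (hac : ¬ G.Adj a c) :
    ∃ B S : Set V, c ∈ B ∧ (∀ z ∈ B, z ∈ s ∧ z ≠ a ∧ ¬ G.Adj a z) ∧
      (∀ z ∈ S, z ∈ s ∧ G.Adj a z) ∧ G.IsClique S ∧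
      ∀ z ∈ B, ∀ w ∈ s, G.Adj z w → w ∈ B ∨ w ∈ S := by
  set B : Set V := {z | ∃ Q : G.Walk c z, ∀ u ∈ Q.support, u ∈ s ∧ u ≠ a ∧ ¬ G.Adj a u}
  set S : Set V := {z | z ∈ s ∧ G.Adj a z ∧ ∃ w ∈ B, G.Adj z w}
  refine ⟨B, S, ⟨.nil, by simpa [hca, hac] using hc⟩, fun z ⟨Q, hQ⟩ => hQ z Q.end_mem_support,
    fun z hz => ⟨hz.1, hz.2.1⟩, ?_, ?_⟩
  · rintro x ⟨hx, hax, b₁, ⟨Q₁, hQ₁⟩, hxb⟩ y ⟨hy, hay, b₂, ⟨Q₂, hQ₂⟩, hyb⟩ hxy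
    refine hs.adj_of_walk ha hx hy hxy hax hay hxb hyb (Q₁.reverse.append Q₂) fun z hz => ?_
    rw [mem_support_append_iff, support_reverse, List.mem_reverse] at hz
    exact hz.elim (hQ₁ z) (hQ₂ z)
  · rintro z ⟨Q, hQ⟩ w hw hzw
    by_cases haw : G.Adj a w
    · exact .inr ⟨hw, haw, z, ⟨Q, hQ⟩, hzw.symm⟩
    refine .inl ⟨Q.concat hzw, fun u hu => ?_⟩
    rw [support_concat, List.mem_append, List.mem_singleton] at hu
    rcases hu with hu | rfl
    · exact hQ u hu
    · exact ⟨hw, fun h => (hQ z Q.end_mem_support).2.2 (h ▸ hzw.symm), haw⟩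

/-- Dirac's argument: choose a non-universal `a` dominating `K ∩ s`. The component `B` of a
non-neighbour of `a` has all its neighbours in `B ∪ S` for the clique separator `S`, so induction
on `B ∪ S`, with `S` in the role of `K`, yields a vertex of `B` that is simplicial in `s`. -/
theorem IsChordalOn.exists_isSimplicialOn_notMem {s : Finset V} (hs : G.IsChordalOn s)
    {K : Set V} (hK : G.IsClique K) {b : V} (hb : b ∈ s) (hbK : b ∉ K) :
    ∃ v ∈ s, v ∉ K ∧ G.IsSimplicialOn s v := by
  induction s using Finset.strongInduction generalizing K b with
  | H s ih =>
  classical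
  by_cases hsK : G.IsClique (s : Set V)
  · exact ⟨b, hb, hbK, hsK.subset Set.inter_subset_left⟩
  obtain ⟨a, ha, ⟨c, hc, hca, hac⟩, haK⟩ :=
    exists_nonuniversal_dominating_of_not_isClique hsK hK
  obtain ⟨B, S, hcB, hB, hS, hSc, hclosed⟩ := hs.exists_isClique_separator ha hc hca hac
  set s' := s.filter fun z => z ∈ B ∨ z ∈ S
  have hs's : s' ⊂ s := filter_ssubset.2
    ⟨a, ha, fun h => h.elim (fun h => (hB a h).2.1 rfl) fun h => (hS a h).2.ne rfl⟩
  obtain ⟨v, hv, hvS, hvsimp⟩ := ih s' hs's (hs.mono (coe_subset.2 (filter_subset _ _))) hSc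
    (mem_filter.2 ⟨hc, .inl hcB⟩) fun hcS => hac (hS c hcS).2
  obtain ⟨hvs, hvBS⟩ := mem_filter.1 hv
  have hvB : v ∈ B := hvBS.resolve_right hvS
  obtain ⟨-, hva, hav⟩ := hB v hvB
  exact ⟨v, hvs, fun hvK => (haK v ⟨hvK, hvs⟩).elim hva hav, hvsimp.subset fun w hw =>
    Set.mem_inter (mem_filter.2 ⟨hw.1, hclosed v hvB w hw.1 hw.2⟩) hw.2⟩

theorem IsChordalOn.exists_isSimplicialOn {s : Finset V} (hs : G.IsChordalOn s)
    (hne : s.Nonempty) : ∃ v ∈ s, G.IsSimplicialOn s v := by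
  obtain ⟨b, hb⟩ := hne
  obtain ⟨v, hv, -, hvs⟩ := hs.exists_isSimplicialOn_notMem isClique_empty hb (Set.notMem_empty b)
  exact ⟨v, hv, hvs⟩

end SimpleGraph

section

variable {V : Type*} [DecidableEq V]

theorem mem_pairFinset {e : Sym2 V} {v : V} : v ∈ pairFinset e ↔ v ∈ e := by
  induction e using Sym2.ind with
  | _ x y => simp [pairFinset]

theorem SimpleGraph.isClique_pairFinset {G : SimpleGraph V} {e : Sym2 V} (he : e ∈ G.edgeSet) :
    G.IsClique (pairFinset e : Set V) := by
  intro x hx y hy hxy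
  rw [mem_coe, mem_pairFinset] at hx hy
  rwa [(Sym2.mem_and_mem_iff hxy).1 ⟨hx, hy⟩] at he

theorem edgeTerm_eq_prod (a : V → Sgn) {e : Sym2 V} (he : ¬ e.IsDiag) :
    edgeTerm a e = ∏ x : pairFinset e, (a x : ℤ) := by
  induction e using Sym2.ind with
  | _ x y => rw [prod_coe_sort (f := fun v => (a v : ℤ)), pairFinset, Sym2.lift_mk,
      prod_pair (Sym2.mk_isDiag_iff.not.1 he), edgeTerm, Sym2.lift_mk]

end

namespace NDModel

variable {G : SimpleGraph V} {M : NDModel G} {W : Finset V}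

variable (M) in
theorem p_eq_marginal {C D : Finset V} (hCD : C ⊆ D) (hD : G.IsClique (D : Set V)) :
    M.p C = marginal hCD (M.p D) := by
  funext g
  rw [M.nodisturb C D hCD hD g, marginal]
  exact sum_congr rfl fun f _ => if_congr funext_iff.symm rfl rfl

variable (M W) in
def IsJointOn (q : (W → Sgn) → ℝ) : Prop :=
  0 ≤ q ∧ ∀ C (hC : C ⊆ W), G.IsClique (C : Set V) → M.p C = marginal hC q

variable (M) in
theorem isJointOn_empty : M.IsJointOn ∅ (M.p ∅) := by
  refine ⟨M.nonneg ∅ (by simp), fun C hC _ => ?_⟩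
  obtain rfl := subset_empty.1 hC
  rw [marginal_self]

theorem IsJointOn.extend {T K D : Finset V} {q : (T → Sgn) → ℝ} (hq : M.IsJointOn T q)
    (hTD : T ⊆ D) (hKD : K ⊆ D) (hD : D ⊆ T ∪ K) (hK : G.IsClique (K : Set V))
    (hcliques : ∀ C ⊆ D, G.IsClique (C : Set V) → C ⊆ T ∨ C ⊆ K) :
    ∃ q', M.IsJointOn D q' := by
  have hI : G.IsClique ((T ∩ K : Finset V) : Set V) := hK.subset (by simp)
  obtain ⟨q', hq', hT, hK'⟩ := exists_marginal_eq_marginal_eq hTD hKD hD hq.1 (M.nonneg K hK)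
    (by rw [← hq.2 _ _ hI, M.p_eq_marginal inter_subset_right hK])
  refine ⟨q', hq', fun C hCD hC => ?_⟩
  rcases hcliques C hCD hC with hCT | hCK
  · rw [hq.2 C hCT hC, ← hT, marginal_marginal]
  · rw [M.p_eq_marginal hCK hK, ← hK', marginal_marginal]

variable (M) in
theorem exists_isJointOn (hW : G.IsChordalOn W) : ∃ q, M.IsJointOn W q := by
  induction W using Finset.strongInduction with
  | H W ih =>
  rcases W.eq_empty_or_nonempty with rfl | hne
  · exact ⟨_, M.isJointOn_empty⟩
  classical
  obtain ⟨v, hvW, hv⟩ := hW.exists_isSimplicialOn hne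
  obtain ⟨q, hq⟩ := ih (W.erase v) (erase_ssubset hvW) (hW.mono (by simp))
  refine hq.extend (K := W.filter fun u => u = v ∨ G.Adj v u) (erase_subset v W)
    (filter_subset _ _) (fun u hu => ?_) ?_ fun C hCW hC => ?_
  · rcases eq_or_ne u v with rfl | huv <;> simp [*]
  · rintro x hx y hy hxy
    simp only [coe_filter] at hx hy
    rcases hx with ⟨hxW, rfl | hvx⟩ <;> rcases hy with ⟨hyW, rfl | hvy⟩
    exacts [(hxy rfl).elim, hvy, hvx.symm, hv ⟨hxW, hvx⟩ ⟨hyW, hvy⟩ hxy]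
  · by_cases hvC : v ∈ C
    · refine .inr fun u hu => mem_filter.2 ⟨hCW hu, ?_⟩
      by_cases huv : u = v
      exacts [.inl huv, .inr (hC hvC hu (Ne.symm huv))]
    · exact .inl fun u hu => mem_erase.2 ⟨fun huv => hvC (huv ▸ hu), hCW hu⟩

theorem IsJointOn.sum_mul_p {q : (W → Sgn) → ℝ} (hq : M.IsJointOn W q) {C : Finset V}
    (hCW : C ⊆ W) (hC : G.IsClique (C : Set V)) (F : (C → Sgn) → ℝ) :
    ∑ g, F g * M.p C g = ∑ f, F (restrict₂ (π := fun _ => Sgn) hCW f) * q f := by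
  rw [hq.2 C hCW hC, sum_mul_marginal]

theorem IsJointOn.sum_eq_one {q : (W → Sgn) → ℝ} (hq : M.IsJointOn W q) : ∑ f, q f = 1 := by
  have h := hq.sum_mul_p (empty_subset W) (by simp) fun _ => 1
  simp only [one_mul] at h
  rw [← h, M.normalized ∅ (by simp)]

theorem IsJointOn.mean_eq {q : (W → Sgn) → ℝ} (hq : M.IsJointOn W q) {ext : (W → Sgn) → V → Sgn}
    (hext : ∀ f (x : W), ext f x = f x) {v : V} (hv : v ∈ W) :
    M.mean v = ∑ f, ((ext f v : ℤ) : ℝ) * q f := by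
  rw [NDModel.mean, hq.sum_mul_p (singleton_subset_iff.2 hv) (by simp)]
  exact sum_congr rfl fun f _ => by rw [hext f ⟨v, hv⟩]; rfl

theorem IsJointOn.corrE_eq {q : (W → Sgn) → ℝ} (hq : M.IsJointOn W q) {ext : (W → Sgn) → V → Sgn}
    (hext : ∀ f (x : W), ext f x = f x) {e : Sym2 V} (he : e ∈ G.edgeSet) (heW : ∀ v ∈ e, v ∈ W) :
    M.corrE e = ∑ f, ((edgeTerm (ext f) e : ℤ) : ℝ) * q f := by
  have hsub : pairFinset e ⊆ W := fun v hv => heW v (mem_pairFinset.1 hv)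
  rw [NDModel.corrE, hq.sum_mul_p hsub (G.isClique_pairFinset he)]
  refine sum_congr rfl fun f _ => ?_
  rw [edgeTerm_eq_prod _ (G.not_isDiag_of_mem_edgeSet he)]
  congr 3 with x
  exact congrArg _ (hext f _).symm

variable (M) in
theorem sum_le_of_isChordalOn [DecidableRel G.Adj] (hW : G.IsChordalOn W) (α : V → ℝ)
    (β : Sym2 V → ℝ) {ω : ℝ}
    (hω : ∀ a : V → Sgn, ∑ v ∈ W, α v * ((a v : ℤ) : ℝ)
      + ∑ e ∈ G.edgeFinset.filter (fun e => ∀ v ∈ e, v ∈ W), β e * ((edgeTerm a e : ℤ) : ℝ) ≤ ω) :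
    ∑ v ∈ W, α v * M.mean v
      + ∑ e ∈ G.edgeFinset.filter (fun e => ∀ v ∈ e, v ∈ W), β e * M.corrE e ≤ ω := by
  obtain ⟨q, hq⟩ := M.exists_isJointOn hW
  let ext (f : W → Sgn) (u : V) : Sgn := if hu : u ∈ W then f ⟨u, hu⟩ else ⟨1, by simp⟩
  have hext (f : W → Sgn) (x : W) : ext f x = f x := dif_pos x.2
  have hmean : ∑ v ∈ W, α v * M.mean v = ∑ f, (∑ v ∈ W, α v * ((ext f v : ℤ) : ℝ)) * q f := by
    simp only [sum_mul, mul_assoc]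
    rw [sum_comm]
    exact sum_congr rfl fun v hv => by rw [hq.mean_eq hext hv, mul_sum]
  have hcorr : ∑ e ∈ G.edgeFinset.filter (fun e => ∀ v ∈ e, v ∈ W), β e * M.corrE e =
      ∑ f, (∑ e ∈ G.edgeFinset.filter (fun e => ∀ v ∈ e, v ∈ W),
        β e * ((edgeTerm (ext f) e : ℤ) : ℝ)) * q f := by
    simp only [sum_mul, mul_assoc]
    rw [sum_comm]
    refine sum_congr rfl fun e he => ?_
    rw [mem_filter, SimpleGraph.mem_edgeFinset] at he
    rw [hq.corrE_eq hext he.1 he.2, mul_sum]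
  calc _ = ∑ f, (∑ v ∈ W, α v * ((ext f v : ℤ) : ℝ) + ∑ e ∈ G.edgeFinset.filter
          (fun e => ∀ v ∈ e, v ∈ W), β e * ((edgeTerm (ext f) e : ℤ) : ℝ)) * q f := by
        rw [hmean, hcorr, ← sum_add_distrib]
        simp only [add_mul]
    _ ≤ ∑ f, ω * q f := sum_le_sum fun f _ => mul_le_mul_of_nonneg_right (hω _) (hq.1 f)
    _ = ω := by rw [← mul_sum, hq.sum_eq_one, mul_one]

end NDModel

/-- the graph-theoretic method for monogamy relations.
Let `G` be a finite commutation graph, `α`, `β` vertex and edge coefficients, and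
suppose the expression decomposes as `α = Σ_j α⁽ʲ⁾`, `β = Σ_j β⁽ʲ⁾` along induced
*chordal* subgraphs of `G` on vertex sets `W j`, with `α⁽ʲ⁾` supported on `W j` and
`β⁽ʲ⁾` supported on the edges of `G` inside `W j`. If `ω j` is the maximum over
deterministic `±1` assignments of the `j`-th subexpression, then every
no-disturbance model on `G` satisfies
`Σ_v α(v)⟨v⟩ + Σ_{{u,v}∈E(G)} β({u,v})⟨uv⟩ ≤ Σ_j ω j`. -/
theorem chordal_decomposition_monogamy
    (G : SimpleGraph V) [DecidableRel G.Adj]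
    (α : V → ℝ) (β : Sym2 V → ℝ)
    (r : ℕ) (W : Fin r → Finset V)
    (hchordal : ∀ j, (G.induce (W j : Set V)).IsChordal)
    (αj : Fin r → V → ℝ) (βj : Fin r → Sym2 V → ℝ)
    (hαsupp : ∀ j v, αj j v ≠ 0 → v ∈ W j)
    (hβsupp : ∀ j e, βj j e ≠ 0 → e ∈ G.edgeFinset ∧ ∀ v ∈ e, v ∈ W j)
    (hα : ∀ v, α v = ∑ j, αj j v)
    (hβ : ∀ e ∈ G.edgeFinset, β e = ∑ j, βj j e)
    (ω : Fin r → ℝ)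
    (hω : ∀ j, IsGreatest
      {x : ℝ | ∃ a : V → Sgn,
        x = ∑ v ∈ W j, αj j v * ((a v : ℤ) : ℝ)
          + ∑ e ∈ G.edgeFinset.filter (fun e => ∀ v ∈ e, v ∈ W j),
              βj j e * ((edgeTerm a e : ℤ) : ℝ)} (ω j)) :
    ∀ M : NDModel G,
      ∑ v, α v * M.mean v + ∑ e ∈ G.edgeFinset, β e * M.corrE e ≤ ∑ j, ω j := by
  intro M
  rw [sum_mul_eq_sum_sum_of_support (fun j => subset_univ (W j))
      (fun j v _ h => hαsupp j v h) (fun v _ => hα v),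
    sum_mul_eq_sum_sum_of_support (fun j => filter_subset _ _)
      (fun j e he h => mem_filter.2 ⟨he, (hβsupp j e h).2⟩) hβ, ← sum_add_distrib]
  exact sum_le_sum fun j _ => M.sum_le_of_isChordalOn (hchordal j).isChordalOn (αj j) (βj j)
    fun a => (hω j).2 ⟨a, rfl⟩
end

section
/- For all functions a : {1,2,3} → {−1,+1}², b : {1,2} → {−1,+1}², and all c ∈ {−1,+1}², writing a(k) = (a_0^{(k)}, a_1^{(k)}), b(l) = (b_0^{(l)}, b_1^{(l)}), c = (c_0, c_1), one has: a_0^{(1)} b_0^{(1)} + a_1^{(1)} b_0^{(2)} + a_0^{(1)} a_1^{(1)} c_0 + a_0^{(2)} b_1^{(1)} + a_1^{(2)} b_1^{(2)} + a_0^{(2)} a_1^{(2)} c_1 + a_0^{(3)} b_0^{(1)} b_1^{(1)} + a_1^{(3)} b_0^{(2)} b_1^{(2)} − a_0^{(3)} a_1^{(3)} c_0 c_1 ≤ 7. -/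
/-! Each of the nine terms of the Bell expression is a product of `±1` outcomes, hence `±1`.
Every outcome occurs in exactly two of the terms and the last term carries a minus sign, so the
product of the nine terms is `-1`. Hence some term equals `-1`, and the sum is at most `8 - 1 = 7`. -/

open Finset

theorem Finset.exists_eq_neg_one_of_prod_eq_neg_one {ι R : Type*} [CommRing R] [LinearOrder R]
    [IsStrictOrderedRing R] {s : Finset ι} {f : ι → R} (hf : ∀ i ∈ s, f i = 1 ∨ f i = -1)
    (hprod : ∏ i ∈ s, f i = -1) : ∃ i ∈ s, f i = -1 := by
  by_contra! h
  have hone : ∏ i ∈ s, f i = 1 := prod_eq_one fun i hi => (hf i hi).resolve_right (h i hi)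
  have : (1 : R) = -1 := hone.symm.trans hprod
  linarith

theorem Finset.sum_le_card_sub_two_of_prod_eq_neg_one {ι R : Type*} [CommRing R] [LinearOrder R]
    [IsStrictOrderedRing R] {s : Finset ι} {f : ι → R} (hf : ∀ i ∈ s, f i = 1 ∨ f i = -1)
    (hprod : ∏ i ∈ s, f i = -1) : ∑ i ∈ s, f i ≤ #s - 2 := by
  classical
  obtain ⟨i, hi, hfi⟩ := exists_eq_neg_one_of_prod_eq_neg_one hf hprod
  have hcard : (#s : R) = #(s.erase i) + 1 := by exact_mod_cast (card_erase_add_one hi).symm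
  have hrest : ∑ j ∈ s.erase i, f j ≤ #(s.erase i) := by
    simpa using sum_le_sum fun j hj =>
      (hf j (mem_of_mem_erase hj)).elim le_of_eq fun h => h ▸ neg_one_lt_zero.le.trans zero_le_one
  rw [← add_sum_erase s f hi, hfi, hcard]
  linarith

/-- The classical (local hidden variable) bound of the reduced
Cabello Bell expression `I^{A₁A₂A₃}_{B₁B₂C₁}`: Alice has three measurements,
Bob two, Charlie one, each outcome being a pair of `±1`-valued bits
(`a k = (a₀^{(k)}, a₁^{(k)})`, etc.); the bound over deterministic strategies is 7. -/
theorem cabello_reduced_classical_bound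
    (a : Fin 3 → ℤ × ℤ) (b : Fin 2 → ℤ × ℤ) (c : ℤ × ℤ)
    (ha : ∀ k, ((a k).1 = 1 ∨ (a k).1 = -1) ∧ ((a k).2 = 1 ∨ (a k).2 = -1))
    (hb : ∀ l, ((b l).1 = 1 ∨ (b l).1 = -1) ∧ ((b l).2 = 1 ∨ (b l).2 = -1))
    (hc : (c.1 = 1 ∨ c.1 = -1) ∧ (c.2 = 1 ∨ c.2 = -1)) :
    (a 0).1 * (b 0).1 + (a 0).2 * (b 1).1 + (a 0).1 * (a 0).2 * c.1
      + (a 1).1 * (b 0).2 + (a 1).2 * (b 1).2 + (a 1).1 * (a 1).2 * c.2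
      + (a 2).1 * ((b 0).1 * (b 0).2) + (a 2).2 * ((b 1).1 * (b 1).2)
      - (a 2).1 * (a 2).2 * (c.1 * c.2) ≤ 7 := by
  simp only [← Int.isUnit_iff] at ha hb hc
  set terms : Fin 9 → ℤ := ![(a 0).1 * (b 0).1, (a 0).2 * (b 1).1, (a 0).1 * (a 0).2 * c.1,
    (a 1).1 * (b 0).2, (a 1).2 * (b 1).2, (a 1).1 * (a 1).2 * c.2,
    (a 2).1 * ((b 0).1 * (b 0).2), (a 2).2 * ((b 1).1 * (b 1).2),
    -((a 2).1 * (a 2).2 * (c.1 * c.2))]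
  have hsign : ∀ i ∈ univ, terms i = 1 ∨ terms i = -1 := by
    intro i _
    rw [← Int.isUnit_iff]
    fin_cases i <;> simp [terms, IsUnit.mul_iff, ha, hb, hc]
  have hprod : ∏ i, terms i = -1 := by
    have hsq : ∏ i, terms i = -((a 0).1 ^ 2 * (a 0).2 ^ 2 * (a 1).1 ^ 2 * (a 1).2 ^ 2
        * (a 2).1 ^ 2 * (a 2).2 ^ 2 * (b 0).1 ^ 2 * (b 0).2 ^ 2 * (b 1).1 ^ 2 * (b 1).2 ^ 2
        * c.1 ^ 2 * c.2 ^ 2) := by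
      simp only [terms, Matrix.vecCons, Fin.prod_cons, Fin.prod_univ_zero]
      ring
    simp [hsq, Int.isUnit_sq, ha, hb, hc]
  calc _ = ∑ i, terms i := by
        simp only [terms, Matrix.vecCons, Fin.sum_cons, Fin.sum_univ_zero]; ring
    _ ≤ #(univ : Finset (Fin 9)) - 2 := sum_le_card_sub_two_of_prod_eq_neg_one hsign hprod
    _ = 7 := by simp
end

section
/- Let G be a finite chordal simple graph with vertex set V, let α : V → ℝ and β : E(G) → ℝ, and for an assignment a : V → {−1,+1} define E(a) = Σ_{v∈V} α(v) a(v) + Σ_{{u,v}∈E(G)} β({u,v}) a(u)a(v). Then the maximum over all no-disturbance models on G with outcomes in {−1,+1} of the quantity Σ_{v∈V} α(v)⟨v⟩ + Σ_{{u,v}∈E(G)} β({u,v})⟨uv⟩ equals the maximum of E(a) over deterministic assignments a : V → {−1,+1}. In particular, on a chordal commutation graph the no-disturbance value of any such expression equals its classical value. -/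
variable {V : Type*} [Fintype V] [DecidableEq V]

namespace SimpleGraph

variable {W : Type*} {G : SimpleGraph W}

def IsSimplicialIn (G : SimpleGraph W) (S : Set W) (v : W) : Prop :=
  G.IsClique (S ∩ G.neighborSet v)

lemma IsSimplicialIn.of_subset {R S : Set W} {v : W} (hv : G.IsSimplicialIn R v)
    (hS : ∀ u ∈ S, G.Adj v u → u ∈ R) : G.IsSimplicialIn S v :=
  IsClique.subset (t := S ∩ G.neighborSet v) (fun u hu => Set.mem_inter (hS u hu.1 hu.2) hu.2) hv

def ReachableIn (G : SimpleGraph W) (S : Set W) (a u : W) : Prop :=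
  ∃ p : G.Walk a u, ∀ z ∈ p.support, z ∈ S

lemma ReachableIn.refl {S : Set W} {a : W} (ha : a ∈ S) : G.ReachableIn S a a :=
  Exists.intro Walk.nil (by simpa using ha)

lemma ReachableIn.mem {S : Set W} {a u : W} (h : G.ReachableIn S a u) : u ∈ S :=
  h.elim fun p hp => hp u p.end_mem_support

lemma ReachableIn.step {S : Set W} {a u w : W} (h : G.ReachableIn S a u) (huw : G.Adj u w)
    (hw : w ∈ S) : G.ReachableIn S a w := by
  obtain ⟨p, hp⟩ := h
  refine ⟨p.concat huw, fun z hz => ?_⟩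
  rw [Walk.support_concat, List.mem_append, List.mem_singleton] at hz
  exact hz.elim (hp z) fun h => h ▸ hw

namespace Walk

lemma exists_shorter_of_adj_of_notMem_edges {x y u w : W} (P : G.Walk x y)
    (hu : u ∈ P.support) (hw : w ∈ P.support) (huw : G.Adj u w) (hP : s(u, w) ∉ P.edges) :
    ∃ Q : G.Walk x y, Q.length < P.length ∧ Q.support ⊆ P.support := by
  classical
  induction P with
  | nil =>
    simp only [support_nil, List.mem_singleton] at hu hw
    exact absurd (hu ▸ hw ▸ huw) G.irrefl
  | @cons x x' y hxx' p ih =>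
    -- a chord at the first vertex `x` lets us jump straight to its other endpoint
    have jump : ∀ z ∈ p.support, G.Adj x z → s(x, z) ∉ (cons hxx' p).edges →
        ∃ Q : G.Walk x y, Q.length < (cons hxx' p).length ∧
          Q.support ⊆ (cons hxx' p).support := by
      intro z hz hxz hnot
      refine ⟨cons hxz (p.dropUntil z hz), ?_, ?_⟩
      · have hsplit := congrArg length (p.take_spec hz)
        have hpos : (p.takeUntil z hz).length ≠ 0 := fun h0 => by
          obtain rfl := eq_of_length_eq_zero h0
          simp at hnot
        rw [length_append] at hsplit
        simp only [length_cons]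
        omega
      · simpa using List.cons_subset_cons x (p.support_dropUntil_subset_support hz)
    simp only [support_cons, List.mem_cons] at hu hw
    rcases hu with rfl | hu <;> rcases hw with rfl | hw
    · exact absurd huw G.irrefl
    · exact jump w hw huw hP
    · exact jump u hu huw.symm (by rwa [Sym2.eq_swap])
    · obtain ⟨Q, hQ, hQp⟩ := ih hu hw (fun h => hP (by simp [h]))
      exact ⟨cons hxx' Q, by simpa using hQ, by simpa using List.cons_subset_cons x hQp⟩

lemma exists_isPath_isChordless_s19 {x y : W} (P : G.Walk x y) :
    ∃ Q : G.Walk x y, Q.IsPath ∧ Q.IsChordless ∧ Q.support ⊆ P.support := by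
  classical
  have hex : ∃ n, ∃ Q : G.Walk x y, Q.IsPath ∧ Q.support ⊆ P.support ∧ Q.length = n :=
    ⟨_, P.bypass, P.bypass_isPath, P.support_bypass_subset_support, rfl⟩
  obtain ⟨Q, hQ, hQP, hlen⟩ := Nat.find_spec hex
  refine ⟨Q, hQ, isChordless_iff_forall_mem_edges.mpr fun u w hu hw huw => ?_, hQP⟩
  by_contra hnot
  obtain ⟨R, hR, hRQ⟩ := Q.exists_shorter_of_adj_of_notMem_edges hu hw huw hnot
  have := Nat.find_min' hex
    ⟨R.bypass, R.bypass_isPath,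
      List.Subset.trans (List.Subset.trans R.support_bypass_subset_support hRQ) hQP, rfl⟩
  have := R.length_bypass_le_length
  omega

end Walk

lemma IsChordal.not_isChordless (hG : G.IsChordal) {v : W} {c : G.Walk v v} (hc : c.IsCycle)
    (hlen : 4 ≤ c.length) : ¬ c.IsChordless := fun h => by
  obtain ⟨u, w, hu, hw, huw, hnot⟩ := hG v c hc hlen
  exact hnot (Walk.adj_toSubgraph_iff_mem_edges.mpr (h.mem_edges hu hw huw))

/-- Otherwise a chordless shortening of `P` closes up through `a` to a chordless cycle of
length at least `4`. -/
lemma IsChordal.adj_of_walk_avoiding_closedNbhd (hG : G.IsChordal) {a x y : W}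
    (hax : G.Adj a x) (hay : G.Adj a y) (hxy : x ≠ y) (P : G.Walk x y)
    (hP : ∀ z ∈ P.support, z = x ∨ z = y ∨ (z ≠ a ∧ ¬ G.Adj a z)) : G.Adj x y := by
  by_contra hnxy
  obtain ⟨Q, hQ, hQc, hQP⟩ := P.exists_isPath_isChordless_s19
  have hQ' : ∀ z ∈ Q.support, z = x ∨ z = y ∨ (z ≠ a ∧ ¬ G.Adj a z) :=
    fun z hz => hP z (hQP hz)
  have haQ : a ∉ Q.support := fun ha => by
    rcases hQ' a ha with h | h | h
    · exact G.irrefl (h ▸ hax)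
    · exact G.irrefl (h ▸ hay)
    · exact h.1 rfl
  have hQlen : 2 ≤ Q.length := by
    rcases Nat.lt_or_ge Q.length 2 with h | h
    · interval_cases hl : Q.length
      · exact absurd (Walk.eq_of_length_eq_zero hl) hxy
      · exact absurd (Walk.adj_of_length_eq_one hl) hnxy
    · exact h
  let c : G.Walk a a := Walk.cons hax (Q.concat hay.symm)
  have hc : c.IsCycle := by
    refine (Walk.cons_isCycle_iff _ hax).mpr ⟨hQ.concat haQ hay.symm, fun h => ?_⟩
    rw [Walk.edges_concat, List.concat_eq_append, List.mem_append] at h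
    rcases h with h | h
    · exact haQ (Q.fst_mem_support_of_mem_edges h)
    · simp only [List.mem_singleton, Sym2.eq, Sym2.rel_iff', Prod.mk.injEq,
        Prod.swap_prod_mk] at h
      rcases h with ⟨rfl, -⟩ | ⟨-, rfl⟩
      · exact G.irrefl hay
      · exact hxy rfl
  refine hG.not_isChordless hc (by simp [c]; omega) ?_
  have hnbr : ∀ z ∈ Q.support, G.Adj a z → s(a, z) ∈ c.edges := fun z hz haz => by
    rcases hQ' z hz with rfl | rfl | h
    · simp [c]
    · simp [c, Sym2.eq_swap]
    · exact absurd haz h.2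
  have hc_supp : ∀ z ∈ c.support, z = a ∨ z ∈ Q.support := fun z hz => by
    simp only [c, Walk.support_cons, Walk.support_concat, List.mem_cons, List.mem_append] at hz
    tauto
  refine Walk.isChordless_iff_forall_mem_edges.mpr fun u w hu hw huw => ?_
  rcases hc_supp u hu with rfl | huQ <;> rcases hc_supp w hw with rfl | hwQ
  · exact absurd huw G.irrefl
  · exact hnbr w hwQ huw
  · rw [Sym2.eq_swap]; exact hnbr u huQ huw.symm
  · simpa [c] using Or.inr (Or.inl (hQc.mem_edges huQ hwQ huw))

lemma IsChordal.exists_clique_separator (hG : G.IsChordal) {S : Set W} {a b : W} (ha : a ∈ S)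
    (hb : b ∈ S) (hab : a ≠ b) (hnadj : ¬ G.Adj a b) :
    ∃ B T : Set W, b ∈ B ∧ a ∉ B ∧ B ⊆ S ∧ T ⊆ S \ B ∧ a ∉ T ∧ G.IsClique T ∧
      ∀ w ∈ B, ∀ z ∈ S, G.Adj w z → z ∈ B ∨ z ∈ T := by
  set O : Set W := {z | z ∈ S ∧ z ≠ a ∧ ¬ G.Adj a z}
  set B : Set W := {u | G.ReachableIn O b u}
  set T : Set W := {x | x ∈ S ∧ G.Adj a x ∧ ∃ w ∈ B, G.Adj x w}
  have hBO : ∀ u ∈ B, u ∈ O := fun u hu => ReachableIn.mem hu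
  refine ⟨B, T, ReachableIn.refl ⟨hb, hab.symm, hnadj⟩, fun h => (hBO a h).2.1 rfl,
    fun u hu => (hBO u hu).1, fun x hx => ⟨hx.1, fun hxB => (hBO x hxB).2.2 hx.2.1⟩,
    fun h => G.irrefl h.2.1, ?_, ?_⟩
  · rintro x ⟨-, hax, x', hx'B, hxx'⟩ y ⟨-, hay, y', hy'B, hyy'⟩ hxy
    obtain ⟨p, hp⟩ := hx'B
    obtain ⟨q, hq⟩ := hy'B
    refine hG.adj_of_walk_avoiding_closedNbhd hax hay hxy
      (Walk.cons hxx' ((p.reverse.append q).concat hyy'.symm)) fun z hz => ?_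
    simp only [Walk.support_cons, Walk.support_concat, Walk.mem_support_append_iff,
      Walk.support_reverse, List.mem_cons, List.mem_append, List.mem_reverse,
      List.not_mem_nil, or_false] at hz
    rcases hz with rfl | (hz | hz) | rfl
    · exact Or.inl rfl
    · exact Or.inr (Or.inr (hp z hz).2)
    · exact Or.inr (Or.inr (hq z hz).2)
    · exact Or.inr (Or.inl rfl)
  · intro w hw z hz hwz
    by_cases haz : G.Adj a z
    · exact Or.inr ⟨hz, haz, w, hw, hwz.symm⟩
    · refine Or.inl (ReachableIn.step hw hwz ⟨hz, ?_, haz⟩)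
      rintro rfl
      exact (hBO w hw).2.2 hwz.symm

lemma IsChordal.exists_isSimplicialIn_notMem [Finite W] (hG : G.IsChordal) {S K : Set W}
    (hKS : K ⊆ S) (hK : G.IsClique K) {c : W} (hcS : c ∈ S) (hcK : c ∉ K) :
    ∃ v ∈ S, v ∉ K ∧ G.IsSimplicialIn S v := by
  induction hn : S.ncard using Nat.strong_induction_on generalizing S K c with
  | _ n ih =>
  by_cases hS : G.IsClique S
  · exact ⟨c, hcS, hcK, hS.subset Set.inter_subset_left⟩
  obtain ⟨a, ha, b, hb, hab, hnadj⟩ : ∃ a ∈ S, ∃ b ∈ S, a ≠ b ∧ ¬ G.Adj a b := by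
    simpa [IsClique, Set.Pairwise] using hS
  obtain ⟨B, T, hbB, haB, hBS, hTS, haT, hT, hBT⟩ :=
    hG.exists_clique_separator ha hb hab hnadj
  have side : ∀ R ⊂ S, T ⊆ R → (∀ v ∈ R, v ∉ T → ∀ u ∈ S, G.Adj v u → u ∈ R) →
      ∀ c ∈ R, c ∉ T → ∃ v ∈ R, v ∉ T ∧ G.IsSimplicialIn S v := by
    intro R hRS hTR hR c hcR hcT
    obtain ⟨v, hvR, hvT, hv⟩ := ih _ (hn ▸ Set.ncard_lt_ncard hRS) hTR hT hcR hcT rfl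
    exact ⟨v, hvR, hvT, hv.of_subset (hR v hvR hvT)⟩
  obtain ⟨v, hv, hvT, hvS⟩ := side (S \ B)
    ((Set.ssubset_iff_of_subset Set.sdiff_subset).mpr ⟨b, hb, fun h => h.2 hbB⟩) hTS
    (fun v hv hvT u hu hvu => ⟨hu, fun huB => (hBT u huB v hv.1 hvu.symm).elim hv.2 hvT⟩)
    a ⟨ha, haB⟩ haT
  obtain ⟨w, hw, hwT, hwS⟩ := side (B ∪ T)
    ((Set.ssubset_iff_of_subset (Set.union_subset hBS fun x hx => (hTS hx).1)).mpr
      ⟨a, ha, fun h => h.elim haB haT⟩) Set.subset_union_right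
    (fun v hv hvT u hu hvu => hBT v (hv.resolve_right hvT) u hu hvu)
    b (Or.inl hbB) (fun h => (hTS h).2 hbB)
  have hwB : w ∈ B := hw.resolve_right hwT
  by_cases hvK : v ∈ K
  · refine ⟨w, hBS hwB, fun hwK => ?_, hwS⟩
    have hvw := hK hvK hwK fun h => hv.2 (h ▸ hwB)
    exact (hBT w hwB v hv.1 hvw.symm).elim hv.2 hvT
  · exact ⟨v, hv.1, hvK, hvS⟩

lemma IsChordal.exists_isSimplicialIn [Finite W] (hG : G.IsChordal) {S : Set W}
    (hS : S.Nonempty) : ∃ v ∈ S, G.IsSimplicialIn S v := by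
  obtain ⟨c, hc⟩ := hS
  obtain ⟨v, hv, -, hvS⟩ :=
    hG.exists_isSimplicialIn_notMem (Set.empty_subset S) (Set.pairwise_empty _) hc
      (Set.notMem_empty c)
  exact ⟨v, hv, hvS⟩

end SimpleGraph

section Pushforward

variable {α β γ : Type*} [Fintype α] [DecidableEq β]

def pushforward (φ : α → β) (p : α → ℝ) (b : β) : ℝ :=
  ∑ a with φ a = b, p a

lemma pushforward_nonneg {φ : α → β} {p : α → ℝ} (hp : ∀ a, 0 ≤ p a) (b : β) :
    0 ≤ pushforward φ p b :=
  Finset.sum_nonneg fun a _ => hp a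

lemma le_pushforward {φ : α → β} {p : α → ℝ} (hp : ∀ a, 0 ≤ p a) (a : α) :
    p a ≤ pushforward φ p (φ a) :=
  Finset.single_le_sum (fun a _ => hp a) (by simp)

lemma sum_mul_pushforward [Fintype β] (φ : α → β) (p : α → ℝ) (f : β → ℝ) :
    ∑ b, f b * pushforward φ p b = ∑ a, f (φ a) * p a := by
  simp_rw [pushforward, Finset.mul_sum]
  rw [← Finset.sum_fiberwise Finset.univ φ (fun a => f (φ a) * p a)]
  refine Finset.sum_congr rfl fun b _ => Finset.sum_congr rfl fun a ha => ?_
  rw [(Finset.mem_filter.mp ha).2]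

lemma sum_pushforward [Fintype β] (φ : α → β) (p : α → ℝ) :
    ∑ b, pushforward φ p b = ∑ a, p a :=
  Finset.sum_fiberwise Finset.univ φ p

lemma pushforward_mul_comp (φ : α → β) (p : α → ℝ) (f : β → ℝ) (b : β) :
    pushforward φ (fun a => p a * f (φ a)) b = pushforward φ p b * f b := by
  rw [pushforward, pushforward, Finset.sum_mul]
  refine Finset.sum_congr rfl fun a ha => ?_
  rw [(Finset.mem_filter.mp ha).2]

lemma pushforward_pushforward [Fintype β] [DecidableEq γ] (φ : α → β) (ψ : β → γ)
    (p : α → ℝ) : pushforward ψ (pushforward φ p) = pushforward (ψ ∘ φ) p := by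
  funext c
  simpa [pushforward, Finset.sum_filter] using
    sum_mul_pushforward φ p (fun b => if ψ b = c then 1 else 0)

lemma pushforward_eq_sum_mul_ite (φ : α → β) (p : α → ℝ) (b : β) :
    pushforward φ p b = ∑ a, p a * if φ a = b then 1 else 0 := by
  simp [pushforward, Finset.sum_filter]

lemma pushforward_ite_eq [Fintype β] (φ : β → γ) [DecidableEq γ] (b : β) (c : γ) :
    pushforward φ (fun b' => if b' = b then 1 else 0) c = if φ b = c then 1 else 0 := by
  simp [pushforward]

end Pushforward

lemma sum_sum_update_mul {ι κ : Type*} [Fintype ι] [DecidableEq ι] [Fintype κ] (i : ι)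
    (f g : (ι → κ) → ℝ) :
    ∑ a, (∑ s, f (Function.update a i s)) * g a
      = ∑ a, f a * ∑ s, g (Function.update a i s) := by
  -- `(a, s) ↦ (a[i ↦ s], a i)` is an involution exchanging the two sides
  let σ : Equiv.Perm ((ι → κ) × κ) := Function.Involutive.toPerm
    (fun p => (Function.update p.1 i p.2, p.1 i)) fun p => by simp
  calc ∑ a, (∑ s, f (Function.update a i s)) * g a
      = ∑ p : (ι → κ) × κ, f (Function.update p.1 i p.2) * g p.1 := by
        simp [Fintype.sum_prod_type, Finset.sum_mul]
    _ = ∑ p : (ι → κ) × κ, f p.1 * g (Function.update p.1 i p.2) := by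
        refine Fintype.sum_equiv σ _ _ fun p => ?_
        change _ = f (Function.update p.1 i p.2)
          * g (Function.update (Function.update p.1 i p.2) i (p.1 i))
        rw [Function.update_idem, Function.update_eq_self]
    _ = ∑ a, f a * ∑ s, g (Function.update a i s) := by
        simp [Fintype.sum_prod_type, Finset.mul_sum]

lemma restrict_update_of_notMem {ι κ : Type*} [DecidableEq ι] {N : Finset ι} {i : ι}
    (hiN : i ∉ N) (a : ι → κ) (s : κ) : N.restrict (Function.update a i s) = N.restrict a :=
  funext fun x => by simp [ne_of_mem_of_not_mem x.2 hiN]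

lemma sum_restrict_insert_update {ι κ : Type*} [DecidableEq ι] [Fintype κ] [DecidableEq κ]
    {N : Finset ι} {i : ι} (hiN : i ∉ N) (F : (↥(insert i N) → κ) → ℝ) (a : ι → κ) :
    ∑ s, F ((insert i N).restrict (Function.update a i s))
      = pushforward (Finset.restrict₂ (Finset.subset_insert i N)) F (N.restrict a) := by
  refine Finset.sum_nbij' (fun s => (insert i N).restrict (Function.update a i s))
    (fun f => f ⟨i, Finset.mem_insert_self i N⟩) (fun s _ => ?_) (fun _ _ => Finset.mem_univ _)
    (fun s _ => by simp) (fun f hf => ?_) (fun _ _ => rfl)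
  · exact Finset.mem_filter.mpr ⟨Finset.mem_univ _, restrict_update_of_notMem hiN a s⟩
  · funext ⟨x, hx⟩
    rcases Finset.mem_insert.mp hx with rfl | hxN
    · simp
    · have := congrFun (Finset.mem_filter.mp hf).2 ⟨x, hxN⟩
      simpa [ne_of_mem_of_not_mem hxN hiN] using this.symm

lemma prod_restrict_pairFinset {W : Type*} [DecidableEq W] (a : W → Sgn) {e : Sym2 W}
    (he : ¬ e.IsDiag) :
    ∏ x : pairFinset e, (((pairFinset e).restrict a x : Sgn) : ℤ) = edgeTerm a e := by
  induction e using Sym2.ind with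
  | h u w =>
    exact (Finset.prod_coe_sort {u, w} fun x => (a x : ℤ)).trans
      (Finset.prod_pair (by simpa using he))

lemma pushforward_restrict₂_apply {C D : Finset V} (hCD : C ⊆ D) (p : (D → Sgn) → ℝ)
    (g : C → Sgn) :
    pushforward (Finset.restrict₂ (π := fun _ => Sgn) hCD) p g
      = ∑ f : D → Sgn, if (∀ x : C, f ⟨x.1, hCD x.2⟩ = g x) then p f else 0 := by
  simp [pushforward, Finset.sum_filter, funext_iff]

namespace NDModel

variable {G : SimpleGraph V}

theorem p_eq_pushforward (M : NDModel G) {C D : Finset V} (hCD : C ⊆ D)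
    (hD : G.IsClique (D : Set V)) :
    M.p C = pushforward (Finset.restrict₂ (π := fun _ => Sgn) hCD) (M.p D) :=
  funext fun g => (M.nodisturb C D hCD hD g).trans (pushforward_restrict₂_apply hCD _ g).symm

def ofJoint (G : SimpleGraph V) (q : (V → Sgn) → ℝ) (hq0 : ∀ a, 0 ≤ q a)
    (hq1 : ∑ a, q a = 1) : NDModel G where
  p C := pushforward C.restrict q
  nonneg _ _ := pushforward_nonneg hq0
  normalized C _ := (sum_pushforward _ q).trans hq1
  nodisturb C D hCD _ g := by
    rw [← pushforward_restrict₂_apply, pushforward_pushforward]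
    rfl

/-- The conditional probability of `f` given its restriction to `N` (junk value `0` when
that restriction has probability `0`). -/
noncomputable def condProb (M : NDModel G) (v : V) (N : Finset V) (f : ↥(insert v N) → Sgn) :
    ℝ :=
  M.p (insert v N) f / M.p N (Finset.restrict₂ (π := fun _ => Sgn) (Finset.subset_insert v N) f)

/-- Keeps the law of `q` away from `v` and draws the value at `v` from `M.condProb v N`. -/
noncomputable def extend (M : NDModel G) (q : (V → Sgn) → ℝ) (v : V) (N : Finset V)
    (a : V → Sgn) : ℝ :=
  (∑ s, q (Function.update a v s)) * M.condProb v N ((insert v N).restrict a)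

section Extension

variable (M : NDModel G) {q : (V → Sgn) → ℝ} {v : V} {N : Finset V}

lemma pushforward_condProb (hD : G.IsClique ((insert v N : Finset V) : Set V))
    (g : N → Sgn) :
    pushforward (Finset.restrict₂ (π := fun _ => Sgn) (Finset.subset_insert v N))
      (M.condProb v N) g = M.p N g * (M.p N g)⁻¹ := by
  have hcond : M.condProb v N = fun f => M.p (insert v N) f
      * (M.p N (Finset.restrict₂ (π := fun _ => Sgn) (Finset.subset_insert v N) f))⁻¹ :=
    funext fun f => div_eq_mul_inv _ _
  rw [hcond, pushforward_mul_comp _ _ fun g => (M.p N g)⁻¹,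
    ← M.p_eq_pushforward (Finset.subset_insert v N) hD]

lemma extend_nonneg (hq : ∀ a, 0 ≤ q a) (hD : G.IsClique ((insert v N : Finset V) : Set V))
    (a : V → Sgn) : 0 ≤ M.extend q v N a :=
  mul_nonneg (Finset.sum_nonneg fun _ _ => hq _) <| div_nonneg (M.nonneg _ hD _)
    (M.nonneg N (hD.subset (by simp)) _)

lemma pushforward_extend_of_notMem (hq : ∀ a, 0 ≤ q a) (hvN : v ∉ N)
    (hD : G.IsClique ((insert v N : Finset V) : Set V)) (hN : M.p N = pushforward N.restrict q)
    (C : Finset V) (hvC : v ∉ C) :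
    pushforward C.restrict (M.extend q v N) = pushforward C.restrict q := by
  -- `q` vanishes wherever its marginal on `N` does, so the junk value `0⁻¹ = 0` is harmless
  have hq_null : ∀ a, q a * (M.p N (N.restrict a) * (M.p N (N.restrict a))⁻¹) = q a := by
    intro a
    by_cases h : M.p N (N.restrict a) = 0
    · have hle := le_pushforward (φ := N.restrict) hq a
      rw [← hN, h] at hle
      simp [le_antisymm hle (hq a)]
    · rw [mul_inv_cancel₀ h, mul_one]
  funext g
  simp only [pushforward_eq_sum_mul_ite]
  set X : (V → Sgn) → ℝ := fun a => if C.restrict a = g then 1 else 0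
  have hX : ∀ a s, X (Function.update a v s) = X a := fun a s => by
    simp only [X, restrict_update_of_notMem hvC]
  calc ∑ a, M.extend q v N a * X a
      = ∑ a, (∑ s, q (Function.update a v s))
          * (M.condProb v N ((insert v N).restrict a) * X a) := by
        simp only [extend, mul_assoc]
    _ = ∑ a, q a
          * ∑ s, M.condProb v N ((insert v N).restrict (Function.update a v s)) * X a := by
        rw [sum_sum_update_mul]; simp only [hX]
    _ = ∑ a, q a * X a := by
        refine Finset.sum_congr rfl fun a _ => ?_
        rw [← Finset.sum_mul, sum_restrict_insert_update hvN, M.pushforward_condProb hD,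
          ← mul_assoc, hq_null]

lemma pushforward_extend_insert (hvN : v ∉ N)
    (hD : G.IsClique ((insert v N : Finset V) : Set V)) (hN : M.p N = pushforward N.restrict q) :
    pushforward (insert v N).restrict (M.extend q v N) = M.p (insert v N) := by
  have hND : N ⊆ insert v N := Finset.subset_insert v N
  funext h
  have hQ : pushforward (insert v N).restrict (fun a => ∑ s, q (Function.update a v s)) h
      = M.p N (Finset.restrict₂ (π := fun _ => Sgn) hND h) := by
    rw [pushforward_eq_sum_mul_ite, sum_sum_update_mul, hN, pushforward_eq_sum_mul_ite]
    refine Finset.sum_congr rfl fun a _ => ?_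
    rw [sum_restrict_insert_update hvN (fun f => if f = h then 1 else 0), pushforward_ite_eq]
    simp only [eq_comm]
  have hDN : M.p N (Finset.restrict₂ (π := fun _ => Sgn) hND h) = 0 →
      M.p (insert v N) h = 0 := fun h0 =>
    le_antisymm (h0 ▸ M.p_eq_pushforward hND hD ▸ le_pushforward (M.nonneg _ hD) h)
      (M.nonneg _ hD h)
  unfold extend
  rw [pushforward_mul_comp, hQ, condProb, mul_div_cancel_of_imp' hDN]

end Extension

structure IsJointOn_s19 (M : NDModel G) (S : Finset V) (q : (V → Sgn) → ℝ) : Prop where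
  nonneg : ∀ a, 0 ≤ q a
  sum_eq_one : ∑ a, q a = 1
  p_eq : ∀ C ⊆ S, G.IsClique (C : Set V) → M.p C = pushforward C.restrict q

lemma exists_isJointOn_empty (M : NDModel G) : ∃ q, M.IsJointOn_s19 ∅ q := by
  let a₀ : V → Sgn := fun _ => Classical.arbitrary Sgn
  have hq1 : ∑ a, Pi.single (M := fun _ => ℝ) a₀ 1 a = 1 := by simp
  refine ⟨Pi.single a₀ 1, ⟨fun a => by by_cases h : a = a₀ <;> simp [h], hq1, fun C hC _ => ?_⟩⟩
  obtain rfl := Finset.subset_empty.mp hC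
  have h1 := M.normalized ∅ (by simp)
  have h2 := (sum_pushforward (∅ : Finset V).restrict _).trans hq1
  rw [Fintype.sum_unique] at h1 h2
  exact funext fun g => by rw [Subsingleton.elim g default, h1, h2]

lemma IsJointOn_s19.exists_of_isSimplicialIn {M : NDModel G} {S : Finset V} {v : V}
    {q : (V → Sgn) → ℝ} (hq : M.IsJointOn_s19 (S.erase v) q)
    (hv : G.IsSimplicialIn S v) : ∃ q', M.IsJointOn_s19 S q' := by
  classical
  set N := (S.erase v).filter (G.Adj v)
  have hvN : v ∉ N := by simp [N]
  have hD : G.IsClique ((insert v N : Finset V) : Set V) := by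
    rw [Finset.coe_insert]
    refine SimpleGraph.IsClique.insert (SimpleGraph.IsClique.subset (fun u hu => ?_) hv)
      fun u hu _ => ?_
    · simp only [N, Finset.coe_filter, Finset.mem_erase, Set.mem_ofPred_eq] at hu
      exact ⟨hu.1.2, hu.2⟩
    · simp only [N, Finset.coe_filter, Set.mem_ofPred_eq] at hu
      exact hu.2
  have hN := hq.p_eq N (Finset.filter_subset _ _) (hD.subset (by simp))
  have hext := M.pushforward_extend_of_notMem hq.nonneg hvN hD hN
  refine ⟨M.extend q v N, ⟨M.extend_nonneg hq.nonneg hD, ?_, fun C hCS hC => ?_⟩⟩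
  · rw [← sum_pushforward (∅ : Finset V).restrict, hext ∅ (Finset.notMem_empty v),
      sum_pushforward, hq.sum_eq_one]
  by_cases hvC : v ∈ C
  · have hCD : C ⊆ insert v N := fun x hx => by
      by_cases hxv : x = v
      · simp [hxv]
      · simp [N, hxv, hCS hx, hC hvC hx (Ne.symm hxv)]
    rw [M.p_eq_pushforward hCD hD, ← M.pushforward_extend_insert hvN hD hN,
      pushforward_pushforward]
    rfl
  · rw [hext C hvC]
    exact hq.p_eq C (fun x hx => Finset.mem_erase.mpr ⟨fun h => hvC (h ▸ hx), hCS hx⟩) hC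

lemma mean_eq_sum (M : NDModel G) {q : (V → Sgn) → ℝ} {v : V}
    (hq : M.p {v} = pushforward ({v} : Finset V).restrict q) :
    M.mean v = ∑ a, ((a v : ℤ) : ℝ) * q a := by
  rw [NDModel.mean, hq, sum_mul_pushforward]
  rfl

lemma corrE_eq_sum (M : NDModel G) {q : (V → Sgn) → ℝ} {e : Sym2 V} (he : ¬ e.IsDiag)
    (hq : M.p (pairFinset e) = pushforward (pairFinset e).restrict q) :
    M.corrE e = ∑ a, ((edgeTerm a e : ℤ) : ℝ) * q a := by
  rw [NDModel.corrE, hq, sum_mul_pushforward]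
  simp only [prod_restrict_pairFinset _ he]

lemma objective_eq_sum [DecidableRel G.Adj] (M : NDModel G) (α : V → ℝ) (β : Sym2 V → ℝ)
    {q : (V → Sgn) → ℝ}
    (hq : ∀ C : Finset V, G.IsClique (C : Set V) → M.p C = pushforward C.restrict q) :
    ∑ v, α v * M.mean v + ∑ e ∈ G.edgeFinset, β e * M.corrE e
      = ∑ a, (∑ v, α v * ((a v : ℤ) : ℝ)
          + ∑ e ∈ G.edgeFinset, β e * ((edgeTerm a e : ℤ) : ℝ)) * q a := by
  have hmean : ∀ v, M.mean v = ∑ a, ((a v : ℤ) : ℝ) * q a := fun v =>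
    M.mean_eq_sum (hq {v} (by simp))
  have hcorr : ∀ e ∈ G.edgeFinset, M.corrE e = ∑ a, ((edgeTerm a e : ℤ) : ℝ) * q a := by
    intro e he
    rw [SimpleGraph.mem_edgeFinset] at he
    refine M.corrE_eq_sum (G.not_isDiag_of_mem_edgeSet he) (hq _ ?_)
    induction e using Sym2.ind with
    | h u w => simp [pairFinset, G.mem_edgeSet.mp he]
  have hcorr' : ∑ e ∈ G.edgeFinset, β e * M.corrE e
      = ∑ e ∈ G.edgeFinset, β e * ∑ a, ((edgeTerm a e : ℤ) : ℝ) * q a :=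
    Finset.sum_congr rfl fun e he => by rw [hcorr e he]
  rw [hcorr']
  simp only [hmean, Finset.mul_sum, Finset.sum_mul, add_mul, Finset.sum_add_distrib]
  rw [Finset.sum_comm (s := Finset.univ), Finset.sum_comm (s := G.edgeFinset)]
  simp only [mul_assoc]

end NDModel

theorem SimpleGraph.IsChordal.exists_isJointOn {G : SimpleGraph V} (hG : G.IsChordal)
    (M : NDModel G) (S : Finset V) : ∃ q, M.IsJointOn_s19 S q := by
  induction S using Finset.strongInduction with
  | H S ih =>
  rcases S.eq_empty_or_nonempty with rfl | hS
  · exact M.exists_isJointOn_empty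
  obtain ⟨v, hvS, hv⟩ := hG.exists_isSimplicialIn (Finset.coe_nonempty.mpr hS)
  obtain ⟨q, hq⟩ := ih (S.erase v) (Finset.erase_ssubset hvS)
  exact hq.exists_of_isSimplicialIn hv

lemma sum_mul_le_sup' {ι : Type*} [Fintype ι] [Nonempty ι] (f : ι → ℝ) {q : ι → ℝ}
    (hq0 : ∀ i, 0 ≤ q i) (hq1 : ∑ i, q i = 1) :
    ∑ i, f i * q i ≤ Finset.univ.sup' Finset.univ_nonempty f :=
  calc ∑ i, f i * q i ≤ ∑ i, Finset.univ.sup' Finset.univ_nonempty f * q i :=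
        Finset.sum_le_sum fun i _ =>
          mul_le_mul_of_nonneg_right (Finset.le_sup' f (Finset.mem_univ i)) (hq0 i)
    _ = Finset.univ.sup' Finset.univ_nonempty f := by rw [← Finset.mul_sum, hq1, mul_one]

/-- On a finite *chordal* commutation graph `G`, the maximum over
all no-disturbance models of the expression
`Σ_{v∈V} α(v)⟨v⟩ + Σ_{{u,v}∈E(G)} β({u,v})⟨uv⟩` is exactly the classical value,
i.e. the maximum over deterministic `±1`-valued assignments `a` of
`E(a) = Σ_v α(v)a(v) + Σ_{{u,v}∈E(G)} β({u,v})a(u)a(v)`. -/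
theorem chordal_ND_value_eq_classical_value
    (G : SimpleGraph V) [DecidableRel G.Adj] (hG : G.IsChordal)
    (α : V → ℝ) (β : Sym2 V → ℝ) :
    IsGreatest
      {x : ℝ | ∃ M : NDModel G,
        x = ∑ v, α v * M.mean v + ∑ e ∈ G.edgeFinset, β e * M.corrE e}
      (Finset.univ.sup' Finset.univ_nonempty
        (fun a : V → Sgn =>
          ∑ v, α v * ((a v : ℤ) : ℝ)
            + ∑ e ∈ G.edgeFinset, β e * ((edgeTerm a e : ℤ) : ℝ))) := by
  refine ⟨Finset.sup'_mem _ (fun x hx y hy => by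
    rcases max_choice x y with h | h <;> rw [h] <;> assumption) _ _ _
    fun a _ => ?_, ?_⟩
  · have hq0 (b : V → Sgn) : 0 ≤ Pi.single (M := fun _ => ℝ) a 1 b := by
      by_cases h : b = a <;> simp [h]
    refine ⟨NDModel.ofJoint G (Pi.single a 1) hq0 (by simp), ?_⟩
    rw [NDModel.objective_eq_sum _ α β fun C _ => rfl]
    simp [Pi.single_apply]
  · rintro x ⟨M, rfl⟩
    obtain ⟨q, hq⟩ := hG.exists_isJointOn M Finset.univ
    rw [M.objective_eq_sum α β fun C => hq.p_eq C (Finset.subset_univ C)]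
    exact sum_mul_le_sup' _ hq.nonneg hq.sum_eq_one
end
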